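/- Let S ⊂ V be a set with 𝓑 ⊄ S in the wired binary tree of depth n+1 with sink z and 𝓑 the set of 2^n neighbors of z. For simple random walk started either at the root or at a uniform vertex, the probability p_S that the walk hits 𝓑 \ S before hitting z satisfies p_S ≤ 2(1 − #(S ∩ 𝓑)/2^n). -/

import Mathlib

open MeasureTheory ProbabilityTheory
open scoped ENNReal Classical

noncomputable section

/-- Vertices of the wired binary tree of depth `n+1`: the tree vertices are binary
strings of length `≤ n`, and `none` is the sink `z` obtained by collapsing all
`2^{n+1}` leaves (the strings of length `n+1`) to a single vertex. -/
def WiredTree (n : ℕ) := Option {l : List Bool // l.length ≤ n}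

instance (n : ℕ) : MeasurableSpace (WiredTree n) := ⊤

/-- Multiplicity of edges from `v` to `w` in the wired binary tree: a vertex of depth
`< n` is joined to its two children, a vertex of depth `n` is joined to the sink by two
edges (its two collapsed leaf-children), and every non-root vertex is joined to its
parent. The sink contributes no outgoing edges here (it is treated as absorbing). -/
def edgeCount (n : ℕ) : WiredTree n → WiredTree n → ℕ
  | none, _ => 0
  | some l, w =>
    (if h : l.1.length < n then
      ((if w = some ⟨l.1 ++ [true], by simpa using h⟩ then 1 else 0) +
       (if w = some ⟨l.1 ++ [false], by simpa using h⟩ then 1 else 0))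
    else (if w = none then 2 else 0))
    + (if l.1 = [] then 0
       else (if w = some ⟨l.1.dropLast, by
            have := l.2; simp only [List.length_dropLast]; omega⟩ then 1 else 0))

/-- Degree of a vertex of the wired binary tree (the sink is absorbing). -/
def deg (n : ℕ) : WiredTree n → ℕ
  | none => 1
  | some l => if l.1 = [] then 2 else 3

/-- Transition probabilities of simple random walk on the wired binary tree,
absorbed at the sink. -/
def treeTrans (n : ℕ) (v w : WiredTree n) : ℝ≥0∞ :=
  match v with
  | none => if w = none then 1 else 0
  | some l => (edgeCount n (some l) w : ℝ≥0∞) / (deg n (some l) : ℝ≥0∞)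

/-- `𝓑`, the set of `2^n` tree neighbors of the sink: the vertices of depth `n`. -/
def treeBdry (n : ℕ) : Set (WiredTree n) :=
  {v | ∃ l, v = some l ∧ l.1.length = n}

/-- `X` is a Markov chain with initial distribution `init` and the transition
probabilities of simple random walk on the wired binary tree. -/
def IsTreeWalk {Ω : Type*} [MeasurableSpace Ω] (n : ℕ) (P : Measure Ω)
    (X : ℕ → Ω → WiredTree n) (init : WiredTree n → ℝ≥0∞) : Prop :=
  (∀ t, Measurable (X t)) ∧
    ∀ (t : ℕ) (s : ℕ → WiredTree n),
      P {ω | ∀ i ≤ t, X i ω = s i} =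
        init (s 0) * ∏ i ∈ Finset.range t, treeTrans n (s i) (s (i + 1))

/-- The number of visits to `𝓑` strictly before the walk first hits the sink. -/
def visitsBdry {Ω : Type*} (n : ℕ) (X : ℕ → Ω → WiredTree n) (ω : Ω) : ℝ≥0∞ :=
  ∑' t : ℕ, (if X t ω ∈ treeBdry n ∧ ∀ s ≤ t, X s ω ≠ none then 1 else 0)

/-!
The xor-mask maps `l ↦ l xor ε` on binary strings are automorphisms of the wired tree that fix
the root, the sink and the uniform distribution, and they act transitively on `𝓑`. Hence, at
every time `t`, the walk is equally likely to be at any given vertex of `𝓑` without having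
hit the sink, so the expected number of visits to `𝓑 \ S` before the sink is
`#(𝓑 \ S) / 2^n` times the expected number of visits to `𝓑`. Each visit to `𝓑` is followed by
a step to the sink with probability at least `2/3`, and the events "in `𝓑` at time `t`, at the
sink at time `t + 1`" are disjoint, so the latter expectation is at most `3/2`. A union bound
over the times of the visits gives `p_S ≤ (3/2) · #(𝓑 \ S) / 2^n`.
-/

section MarkovChain

variable {α Ω : Type*}

def window (X : ℕ → Ω → α) (t : ℕ) (ω : Ω) : Fin (t + 1) → α := fun i => X i ω

def pathWeight (init : α → ℝ≥0∞) (K : α → α → ℝ≥0∞) {t : ℕ} (v : Fin (t + 1) → α) : ℝ≥0∞ :=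
  init (v 0) * ∏ i : Fin t, K (v i.castSucc) (v i.succ)

def visitBefore (X : ℕ → Ω → α) (z : α) (t : ℕ) (A : Set α) : Set Ω :=
  {ω | X t ω ∈ A ∧ ∀ s ≤ t, X s ω ≠ z}

lemma window_succ (X : ℕ → Ω → α) (t : ℕ) (ω : Ω) :
    window X (t + 1) ω = Fin.snoc (window X t ω) (X (t + 1) ω) := by
  ext i
  refine Fin.lastCases ?_ (fun j => ?_) i <;> simp [window]

lemma visitBefore_eq_preimage_window (X : ℕ → Ω → α) (z : α) (t : ℕ) (A : Set α) :
    visitBefore X z t A = window X t ⁻¹' {v | v (Fin.last t) ∈ A ∧ ∀ i, v i ≠ z} := by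
  ext ω
  simp [visitBefore, window, Fin.forall_iff]

lemma pathWeight_snoc (init : α → ℝ≥0∞) (K : α → α → ℝ≥0∞) {t : ℕ} (v : Fin (t + 1) → α)
    (a : α) : pathWeight init K (Fin.snoc v a : Fin (t + 2) → α)
      = pathWeight init K v * K (v (Fin.last t)) a := by
  simp [pathWeight, Fin.prod_univ_castSucc, mul_assoc, -Fin.castSucc_succ, Fin.succ_castSucc]

lemma pathWeight_comp (init : α → ℝ≥0∞) (K : α → α → ℝ≥0∞) {φ : α → α}
    (hinit : ∀ a, init (φ a) = init a) (hK : ∀ a b, K (φ a) (φ b) = K a b) {t : ℕ}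
    (v : Fin (t + 1) → α) : pathWeight init K (φ ∘ v) = pathWeight init K v := by
  simp [pathWeight, hinit, hK]

variable [MeasurableSpace α] [MeasurableSpace Ω]

def IsMarkovChain (P : Measure Ω) (X : ℕ → Ω → α) (init : α → ℝ≥0∞)
    (K : α → α → ℝ≥0∞) : Prop :=
  (∀ t, Measurable (X t)) ∧
    ∀ (t : ℕ) (s : ℕ → α),
      P {ω | ∀ i ≤ t, X i ω = s i} = init (s 0) * ∏ i ∈ Finset.range t, K (s i) (s (i + 1))

namespace IsMarkovChain

variable {P : Measure Ω} {X : ℕ → Ω → α} {init : α → ℝ≥0∞} {K : α → α → ℝ≥0∞}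

lemma measurable_window (hX : IsMarkovChain P X init K) (t : ℕ) : Measurable (window X t) :=
  measurable_pi_lambda _ fun i => hX.1 i

lemma measure_window_eq (hX : IsMarkovChain P X init K) {t : ℕ} (v : Fin (t + 1) → α) :
    P (window X t ⁻¹' {v}) = pathWeight init K v := by
  have hset : window X t ⁻¹' {v} = {ω | ∀ i ≤ t, X i ω = v (Fin.clamp i t)} := by
    ext ω
    simp only [Set.mem_preimage, Set.mem_singleton_iff, funext_iff, Fin.forall_iff, window,
      Nat.lt_succ_iff, Set.mem_ofPred_eq]
    refine forall₂_congr fun i hi => ?_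
    rw [show Fin.clamp i t = ⟨i, by omega⟩ from Fin.ext (by simp [hi])]
  rw [hset, hX.2, pathWeight, ← Fin.prod_univ_eq_prod_range]
  simp only [Fin.clamp, zero_le, inf_of_le_left, Fin.zero_eta, Fin.is_le', Order.add_one_le_iff,
    Fin.is_lt]
  rfl

variable [Fintype α] [MeasurableSingletonClass α]

lemma measure_window_preimage (hX : IsMarkovChain P X init K) {t : ℕ}
    (E : Set (Fin (t + 1) → α)) :
    P (window X t ⁻¹' E) = ∑ v ∈ Finset.univ.filter (· ∈ E), pathWeight init K v := by
  conv_lhs => rw [show E = ↑(Finset.univ.filter (· ∈ E)) by simp]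
  rw [← sum_measure_preimage_singleton _
    fun v _ => hX.measurable_window t (measurableSet_singleton v)]
  exact Finset.sum_congr rfl fun v _ => hX.measure_window_eq v

lemma measure_window_preimage_inter_eq (hX : IsMarkovChain P X init K) {t : ℕ}
    (E : Set (Fin (t + 1) → α)) (y : α) :
    P (window X t ⁻¹' E ∩ X (t + 1) ⁻¹' {y})
      = ∑ v ∈ Finset.univ.filter (· ∈ E), pathWeight init K v * K (v (Fin.last t)) y := by
  have hset : window X t ⁻¹' E ∩ X (t + 1) ⁻¹' {y}
      = window X (t + 1) ⁻¹' ((fun v => Fin.snoc v y) '' E) := by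
    ext ω
    simp [window_succ, Fin.snoc_injective2.eq_iff, eq_comm]
  have himage : Finset.univ.filter (· ∈ (fun v => Fin.snoc v y) '' E)
      = (Finset.univ.filter (· ∈ E)).image fun v => (Fin.snoc v y : Fin (t + 2) → α) := by
    ext w
    simp
  rw [hset, hX.measure_window_preimage, himage,
    Finset.sum_image fun v _ w _ h => (Fin.snoc_injective2.eq_iff.1 h).1]
  exact Finset.sum_congr rfl fun v _ => pathWeight_snoc init K v y

lemma measure_window_comp_preimage (hX : IsMarkovChain P X init K) (φ : α ≃ α)
    (hinit : ∀ a, init (φ a) = init a) (hK : ∀ a b, K (φ a) (φ b) = K a b) {t : ℕ}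
    (E : Set (Fin (t + 1) → α)) :
    P (window X t ⁻¹' ((φ ∘ ·) ⁻¹' E)) = P (window X t ⁻¹' E) := by
  rw [hX.measure_window_preimage, hX.measure_window_preimage]
  refine Finset.sum_equiv (Equiv.piCongrRight fun _ => φ) (fun _ => ?_)
    fun v _ => (pathWeight_comp init K hinit hK v).symm
  simp only [Finset.mem_filter, Finset.mem_univ, true_and]
  rfl

lemma measurableSet_visitBefore (hX : IsMarkovChain P X init K) (z : α) (t : ℕ) (A : Set α) :
    MeasurableSet (visitBefore X z t A) := by
  rw [visitBefore_eq_preimage_window]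
  exact hX.measurable_window t (Set.toFinite _).measurableSet

lemma measure_visitBefore_eq_sum (hX : IsMarkovChain P X init K) (z : α) (t : ℕ)
    (A : Finset α) :
    P (visitBefore X z t A) = ∑ x ∈ A, P (visitBefore X z t {x}) := by
  have hset : visitBefore X z t A = ⋃ x ∈ A, visitBefore X z t {x} := by
    ext ω
    simp [visitBefore]
  rw [hset, measure_biUnion_finset _ fun x _ => hX.measurableSet_visitBefore z t {x}]
  intro x _ y _ hxy
  exact Set.disjoint_left.2 fun ω hx hy => hxy (hx.1.symm.trans hy.1)

lemma measure_visitBefore_singleton_apply (hX : IsMarkovChain P X init K) (z : α) (φ : α ≃ α)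
    (hinit : ∀ a, init (φ a) = init a) (hK : ∀ a b, K (φ a) (φ b) = K a b) (hz : φ z = z)
    (t : ℕ) (x : α) :
    P (visitBefore X z t {φ x}) = P (visitBefore X z t {x}) := by
  rw [visitBefore_eq_preimage_window, visitBefore_eq_preimage_window,
    ← hX.measure_window_comp_preimage φ hinit hK]
  have hφz : ∀ a, φ a = z ↔ a = z := fun a => by
    conv_lhs => rw [← hz]
    exact φ.injective.eq_iff
  congr 2
  ext v
  simp [hφz]

lemma tsum_measure_visitBefore_le [IsProbabilityMeasure P] (hX : IsMarkovChain P X init K)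
    (z : α) {B : Set α} {p : ℝ≥0∞} (hB : ∀ x ∈ B, p ≤ K x z) :
    p * ∑' t, P (visitBefore X z t B) ≤ 1 := by
  set F : ℕ → Set Ω := fun t => visitBefore X z t B ∩ X (t + 1) ⁻¹' {z}
  have hstep : ∀ t, p * P (visitBefore X z t B) ≤ P (F t) := fun t => by
    simp only [F, visitBefore_eq_preimage_window]
    rw [hX.measure_window_preimage, hX.measure_window_preimage_inter_eq, Finset.mul_sum]
    refine Finset.sum_le_sum fun v hv => ?_
    rw [mul_comm]
    simp only [Finset.mem_filter, Set.mem_ofPred_eq] at hv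
    exact mul_le_mul_right (hB _ hv.2.1) _
  have hdisj : Pairwise (Function.onFun Disjoint F) := by
    refine (pairwise_disjoint_on F).2 fun a b hab => Set.disjoint_left.2 fun ω ha hb => ?_
    exact hb.1.2 (a + 1) hab ha.2
  calc p * ∑' t, P (visitBefore X z t B) = ∑' t, p * P (visitBefore X z t B) :=
        ENNReal.tsum_mul_left.symm
    _ ≤ ∑' t, P (F t) := ENNReal.tsum_le_tsum hstep
    _ ≤ P (⋃ t, F t) := tsum_meas_le_meas_iUnion_of_disjoint P
        (fun t => (hX.measurableSet_visitBefore z t B).inter (hX.1 _ (measurableSet_singleton z)))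
        hdisj
    _ ≤ 1 := prob_le_one

end IsMarkovChain

end MarkovChain

instance (n : ℕ) : Finite (WiredTree n) :=
  haveI : Finite {l : List Bool // l.length ≤ n} := (List.finite_length_le Bool n).to_subtype
  inferInstanceAs (Finite (Option _))

instance (n : ℕ) : Fintype (WiredTree n) := Fintype.ofFinite _

instance (n : ℕ) : MeasurableSingletonClass (WiredTree n) :=
  ⟨fun _ => MeasurableSpace.measurableSet_top⟩

def flipBits (ε : ℕ → Bool) (l : List Bool) : List Bool := l.mapIdx fun i b => b ^^ ε i

section flipBits

variable (ε : ℕ → Bool)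

@[simp] lemma length_flipBits (l : List Bool) : (flipBits ε l).length = l.length :=
  List.length_mapIdx

@[simp] lemma flipBits_eq_nil_iff {l : List Bool} : flipBits ε l = [] ↔ l = [] :=
  List.mapIdx_eq_nil_iff

lemma flipBits_involutive : Function.Involutive (flipBits ε) := fun l =>
  List.ext_getElem (by simp) (by simp [flipBits])

lemma flipBits_append_singleton (l : List Bool) (b : Bool) :
    flipBits ε l ++ [b] = flipBits ε (l ++ [b ^^ ε l.length]) := by
  simp [flipBits, List.mapIdx_append]

lemma flipBits_dropLast (l : List Bool) : flipBits ε l.dropLast = (flipBits ε l).dropLast :=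
  List.ext_getElem (by simp) (by simp [flipBits])

lemma flipBits_xor_getD {a b : List Bool} (h : a.length = b.length) :
    flipBits (fun i => a.getD i false ^^ b.getD i false) a = b :=
  List.ext_getElem (by simp [h]) fun i _ h₂ => by
    simp [flipBits, h₂, List.getElem?_eq_getElem (h ▸ h₂ : i < a.length)]

end flipBits

section treeFlip

variable {n : ℕ} (ε : ℕ → Bool)

def treeFlip (n : ℕ) (ε : ℕ → Bool) : WiredTree n → WiredTree n :=
  Option.map fun l => ⟨flipBits ε l.1, (length_flipBits ε l.1).trans_le l.2⟩

lemma treeFlip_involutive : Function.Involutive (treeFlip n ε)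
  | none => rfl
  | some l => congrArg some (Subtype.ext (flipBits_involutive ε l.1))

lemma treeFlip_eq_none_iff {v : WiredTree n} : treeFlip n ε v = none ↔ v = none :=
  Option.map_eq_none_iff

lemma eq_some_iff_map_val {w : WiredTree n} {L : List Bool} {h : L.length ≤ n} :
    w = some ⟨L, h⟩ ↔ w.map Subtype.val = some L := by
  rcases w with _ | l
  · exact iff_of_false nofun nofun
  · exact Option.some_inj.trans (Subtype.ext_iff.trans Option.some_inj.symm)

lemma map_val_treeFlip (w : WiredTree n) :
    (treeFlip n ε w).map Subtype.val = (w.map Subtype.val).map (flipBits ε) := by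
  rcases w with _ | l <;> rfl

lemma map_flipBits_eq_some_iff {o : Option (List Bool)} {L : List Bool} :
    o.map (flipBits ε) = some (flipBits ε L) ↔ o = some L := by
  rw [← Option.map_some, (Option.map_injective (flipBits_involutive ε).injective).eq_iff]

lemma edgeCount_treeFlip (v w : WiredTree n) :
    edgeCount n (treeFlip n ε v) (treeFlip n ε w) = edgeCount n v w := by
  rcases v with _ | l
  · rfl
  have hsum : ∀ (o : Option (List Bool)) (e : Bool),
      ((if o = some (l.1 ++ [true ^^ e]) then 1 else 0) +
        (if o = some (l.1 ++ [false ^^ e]) then 1 else 0) : ℕ)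
      = (if o = some (l.1 ++ [true]) then 1 else 0) +
        (if o = some (l.1 ++ [false]) then 1 else 0) := by
    intro o e
    cases e
    exacts [rfl, add_comm _ _]
  change edgeCount n (some ⟨flipBits ε l.1, _⟩) _ = _
  simp only [edgeCount, eq_some_iff_map_val, map_val_treeFlip]
  simp only [length_flipBits, flipBits_eq_nil_iff, treeFlip_eq_none_iff, ← flipBits_dropLast,
    flipBits_append_singleton, map_flipBits_eq_some_iff, hsum]

lemma deg_treeFlip (v : WiredTree n) : deg n (treeFlip n ε v) = deg n v := by
  rcases v with _ | l
  · rfl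
  · simp only [treeFlip, Option.map_some, deg, flipBits_eq_nil_iff]

lemma treeTrans_treeFlip (v w : WiredTree n) :
    treeTrans n (treeFlip n ε v) (treeFlip n ε w) = treeTrans n v w := by
  rcases v with _ | l
  · exact if_congr (treeFlip_eq_none_iff ε) rfl rfl
  · exact congrArg₂ (fun a b : ℕ => (a : ℝ≥0∞) / b)
      (edgeCount_treeFlip ε (some l) w) (deg_treeFlip ε (some l))

lemma init_treeFlip {init : WiredTree n → ℝ≥0∞}
    (hinit : (∀ v, init v = if v = some ⟨[], by simp⟩ then 1 else 0) ∨
      (∀ v, init v = if v = none then 0 else ((2 ^ (n + 1) - 1 : ℝ≥0∞))⁻¹))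
    (v : WiredTree n) : init (treeFlip n ε v) = init v := by
  rcases hinit with h | h <;> rw [h, h]
  · exact if_congr (treeFlip_involutive ε).eq_iff rfl rfl
  · rw [treeFlip_eq_none_iff]

lemma exists_treeFlip_eq {x y : WiredTree n} (hx : x ∈ treeBdry n) (hy : y ∈ treeBdry n) :
    ∃ ε, treeFlip n ε x = y := by
  obtain ⟨a, rfl, ha⟩ := hx
  obtain ⟨b, rfl, hb⟩ := hy
  exact ⟨fun i => a.1.getD i false ^^ b.1.getD i false,
    congrArg some (Subtype.ext (flipBits_xor_getD (ha.trans hb.symm)))⟩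

end treeFlip

lemma two_div_three_le_treeTrans_none {n : ℕ} {x : WiredTree n} (hx : x ∈ treeBdry n) :
    2 / 3 ≤ treeTrans n x none := by
  obtain ⟨a, rfl, ha⟩ := hx
  have hedge : edgeCount n (some a) none = 2 := by
    simp only [edgeCount, ha, lt_self_iff_false, ↓reduceDIte, reduceCtorEq, ↓reduceIte, ite_self,
      add_zero]
    exact if_pos rfl
  have hdeg : deg n (some a) ≤ 3 := by
    simp only [deg]
    split_ifs <;> norm_num
  change 2 / 3 ≤ (edgeCount n (some a) none : ℝ≥0∞) / deg n (some a)
  rw [hedge]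
  exact ENNReal.div_le_div_left (by exact_mod_cast hdeg) 2

lemma ncard_treeBdry (n : ℕ) : (treeBdry n).ncard = 2 ^ n := by
  have hrange : treeBdry n = Set.range fun v : List.Vector Bool n => some ⟨v.1, v.2.le⟩ := by
    ext x
    constructor
    · rintro ⟨l, rfl, hl⟩
      exact ⟨⟨l.1, hl⟩, rfl⟩
    · rintro ⟨v, rfl⟩
      exact ⟨_, rfl, v.2⟩
  rw [hrange]
  refine (Set.ncard_range_of_injective fun v w h => ?_).trans ?_
  · have h' : (⟨v.1, v.2.le⟩ : {l : List Bool // l.length ≤ n}) = ⟨w.1, w.2.le⟩ :=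
      Option.some.inj h
    exact List.Vector.eq v w (congrArg (fun x : {l : List Bool // l.length ≤ n} => x.1) h')
  · simp [Nat.card_eq_fintype_card, card_vector]

lemma IsTreeWalk.measure_visitBefore_eq_ncard_mul {n : ℕ} {Ω : Type*} [MeasurableSpace Ω]
    {P : Measure Ω} {X : ℕ → Ω → WiredTree n} {init : WiredTree n → ℝ≥0∞}
    (hX : IsTreeWalk n P X init) (hinit : ∀ ε v, init (treeFlip n ε v) = init v)
    {x₀ : WiredTree n} (hx₀ : x₀ ∈ treeBdry n) (t : ℕ) {A : Set (WiredTree n)}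
    (hA : A ⊆ treeBdry n) :
    P (visitBefore X none t A) = A.ncard * P (visitBefore X none t {x₀}) := by
  have hchain : IsMarkovChain P X init (treeTrans n) := hX
  have hsum := hchain.measure_visitBefore_eq_sum none t A.toFinset
  rw [Set.coe_toFinset] at hsum
  rw [hsum, Set.ncard_eq_toFinset_card', ← nsmul_eq_mul, ← Finset.sum_const]
  refine Finset.sum_congr rfl fun x hx => ?_
  obtain ⟨ε, rfl⟩ := exists_treeFlip_eq hx₀ (hA (A.mem_toFinset.1 hx))
  exact hchain.measure_visitBefore_singleton_apply none (treeFlip_involutive ε).toPerm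
    (hinit ε) (treeTrans_treeFlip ε) rfl t x₀

lemma le_ofReal_two_mul_one_sub_div {a s : ℝ≥0∞} {k j N : ℕ} (hN : 0 < N) (hkj : k + j = N)
    (ha : a ≤ k * s) (hs : 2 / 3 * (N * s) ≤ 1) :
    a ≤ ENNReal.ofReal (2 * (1 - j / N)) := by
  have hs_top : s ≠ ⊤ := by
    rintro rfl
    simp [hN.ne', ENNReal.mul_top] at hs
  have hks_top : (k : ℝ≥0∞) * s ≠ ⊤ := ENNReal.mul_ne_top (ENNReal.natCast_ne_top k) hs_top
  have hNr : (0 : ℝ) < N := by exact_mod_cast hN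
  have hkjr : (k : ℝ) + j = N := by exact_mod_cast hkj
  have ha' : a.toReal ≤ k * s.toReal := by
    simpa using ENNReal.toReal_mono hks_top ha
  have hs' : 2 / 3 * (N * s.toReal) ≤ 1 := by
    simpa using ENNReal.toReal_mono ENNReal.one_ne_top hs
  have hs0 : 0 ≤ s.toReal := ENNReal.toReal_nonneg
  rw [show (1 : ℝ) - j / N = k / N by field_simp; linarith,
    ENNReal.le_ofReal_iff_toReal_le (ne_top_of_le_ne_top hks_top ha) (by positivity),
    mul_div_assoc', le_div_iff₀ hNr]
  nlinarith

/-- For simple random walk on the wired binary tree started either at the root or at a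
uniform tree vertex, and any `S` with `𝓑 ⊄ S`, the probability `p_S` of hitting
`𝓑 \ S` before the sink satisfies `p_S ≤ 2(1 − #(S ∩ 𝓑)/2^n)`. -/
theorem tree_hit_bdry_prob_bound (n : ℕ)
    {Ω : Type*} [MeasurableSpace Ω] (P : Measure Ω) [IsProbabilityMeasure P]
    (X : ℕ → Ω → WiredTree n) (init : WiredTree n → ℝ≥0∞)
    (hX : IsTreeWalk n P X init)
    (hinit : (∀ v, init v = if v = some ⟨[], by simp⟩ then 1 else 0) ∨
      (∀ v, init v = if v = none then 0 else ((2 ^ (n + 1) - 1 : ℝ≥0∞))⁻¹))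
    (S : Set (WiredTree n)) :
    P {ω | ∃ t : ℕ, X t ω ∈ treeBdry n \ S ∧ ∀ s ≤ t, X s ω ≠ none}
      ≤ ENNReal.ofReal (2 * (1 - (Set.ncard (S ∩ treeBdry n) : ℝ) / 2 ^ n)) := by
  obtain ⟨x₀, hx₀⟩ : (treeBdry n).Nonempty :=
    Set.nonempty_of_ncard_ne_zero (by simp [ncard_treeBdry])
  set m : ℕ → ℝ≥0∞ := fun t => P (visitBefore X none t {x₀})
  have hvisit : ∀ t, ∀ A ⊆ treeBdry n, P (visitBefore X none t A) = A.ncard * m t :=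
    fun t A hA => hX.measure_visitBefore_eq_ncard_mul (fun ε => init_treeFlip ε hinit) hx₀ t hA
  have hhit : P {ω | ∃ t : ℕ, X t ω ∈ treeBdry n \ S ∧ ∀ s ≤ t, X s ω ≠ none}
      ≤ (treeBdry n \ S).ncard * ∑' t, m t :=
    calc _ = P (⋃ t, visitBefore X none t (treeBdry n \ S)) := by
          congr 1; ext; simp [visitBefore]
      _ ≤ ∑' t, P (visitBefore X none t (treeBdry n \ S)) := measure_iUnion_le _
      _ = _ := by simp_rw [hvisit _ _ Set.sdiff_subset, ENNReal.tsum_mul_left]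
  have hbdry : 2 / 3 * ((2 ^ n : ℕ) * ∑' t, m t) ≤ 1 := by
    have := IsMarkovChain.tsum_measure_visitBefore_le hX none (B := treeBdry n)
      fun x hx => two_div_three_le_treeTrans_none hx
    simpa [hvisit _ _ subset_rfl, ncard_treeBdry, ENNReal.tsum_mul_left] using this
  have hcard : (treeBdry n \ S).ncard + (S ∩ treeBdry n).ncard = 2 ^ n := by
    rw [add_comm, Set.inter_comm, Set.ncard_inter_add_ncard_sdiff_eq_ncard, ncard_treeBdry]
  exact_mod_cast le_ofReal_two_mul_one_sub_div (by positivity) hcard hhit hbdry
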